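/- Fix an integer N ≥ 1 and define, for t ∈ (0,1), the complex (N+2)×(N+2) matrix P(t) with rows and columns indexed by 0,…,N+1, given by: P(t)_{0,0} = 1; P(t)_{1,0} = 0; P(t)_{i,0} = (−1)^i (2πi)^{1−i} Li_{i−1}(t) for 2 ≤ i ≤ N+1; P(t)_{i,j} = (−log t/(2πi))^{i−j}/(i−j)! for 1 ≤ j ≤ i ≤ N+1; and P(t)_{i,j} = 0 in all remaining cases. Then the matrix-valued function P is differentiable on (0,1) and satisfies the first-order differential equation P′(t) = (B₀/t + B₁/(1−t)) · P(t), where B₀ = −(1/(2πi)) Σ_{i=1}^{N} E_{i+1,i} and B₁ = (1/(2πi)) E_{2,0}, with E_{a,b} the elementary matrix having a 1 in position (a,b) and 0 elsewhere. (P is the period matrix describing the polylogarithmic variation: its columns form a flat basis expressed in the holomorphic frame (f, e_0, e_1, …).) -/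

import Mathlib

open scoped Nat

/-- The polylogarithm power series `Li_j(t) = ∑_{k ≥ 1} t^k / k^j` for real `t ∈ (0,1)`,
viewed as a complex number. -/
noncomputable def LiSeries (j : ℕ) (t : ℝ) : ℂ :=
  ∑' k : ℕ, (t : ℂ) ^ (k + 1) / ((k + 1 : ℕ) : ℂ) ^ j

/-- The period matrix `P(t)` of the polylogarithm, of size `(N+2) × (N+2)`, with rows and
columns indexed by `0, …, N+1`:  `P(t)_{0,0} = 1`, `P(t)_{1,0} = 0`,
`P(t)_{i,0} = (-1)^i (2πi)^{1-i} Li_{i-1}(t)` for `2 ≤ i ≤ N+1`,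
`P(t)_{i,j} = (-log t/(2πi))^{i-j}/(i-j)!` for `1 ≤ j ≤ i ≤ N+1`, and `0` otherwise. -/
noncomputable def Pmat (N : ℕ) (t : ℝ) : Matrix (Fin (N + 2)) (Fin (N + 2)) ℂ :=
  fun i j =>
    if (j : ℕ) = 0 then
      if (i : ℕ) = 0 then 1
      else if (i : ℕ) = 1 then 0
      else (-1) ^ (i : ℕ) * (2 * Real.pi * Complex.I) ^ (1 - (i : ℤ)) *
        LiSeries ((i : ℕ) - 1) t
    else if (j : ℕ) ≤ (i : ℕ) then
      ((-Real.log t : ℂ) / (2 * Real.pi * Complex.I)) ^ ((i : ℕ) - (j : ℕ)) /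
        (Nat.factorial ((i : ℕ) - (j : ℕ)) : ℂ)
    else 0

open Fin.NatCast in
/-- `B₀ = -(1/(2πi)) ∑_{i=1}^{N} E_{i+1,i}`. -/
noncomputable def Bzero (N : ℕ) : Matrix (Fin (N + 2)) (Fin (N + 2)) ℂ :=
  (-(1 / (2 * Real.pi * Complex.I))) •
    ∑ i ∈ Finset.Icc 1 N,
      Matrix.single ((i + 1 : ℕ) : Fin (N + 2)) ((i : ℕ) : Fin (N + 2)) 1

open Fin.NatCast in
/-- `B₁ = (1/(2πi)) E_{2,0}`. -/
noncomputable def Bone (N : ℕ) : Matrix (Fin (N + 2)) (Fin (N + 2)) ℂ :=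
  (1 / (2 * Real.pi * Complex.I)) •
    Matrix.single ((2 : ℕ) : Fin (N + 2)) ((0 : ℕ) : Fin (N + 2)) 1

/-!
Write `ε(t) = -log t / (2πi)`. Below the diagonal the entries are `ε^n / n!`, and
`(ε^(n+1) / (n+1)!)' = -(2πi t)⁻¹ ε^n / n!`. In the first column, `t Li_(k+1)'(t) = Li_k(t)`
and `Li_0(t) = t / (1 - t)`; the latter produces the pole at `t = 1`, i.e. `B₁`.
Left multiplication by `B₀` shifts the rows of a matrix down by one and `B₁` copies row `0`
into row `2`, so both sides agree entry by entry.
-/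

open Real Complex

lemma hasDerivAt_liSeries_term (j k : ℕ) (y : ℝ) :
    HasDerivAt (fun s : ℝ => (s : ℂ) ^ (k + 1) / ((k + 1 : ℕ) : ℂ) ^ (j + 1))
      ((y : ℂ) ^ k / ((k + 1 : ℕ) : ℂ) ^ j) y := by
  refine (((hasDerivAt_pow (k + 1) (y : ℂ)).comp_ofReal).div_const
    (((k + 1 : ℕ) : ℂ) ^ (j + 1))).congr_deriv ?_
  rw [Nat.add_sub_cancel, pow_succ _ j]
  field_simp

lemma hasDerivAt_liSeries_succ_tsum (j : ℕ) {t : ℝ} (ht : |t| < 1) :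
    HasDerivAt (LiSeries (j + 1)) (∑' k : ℕ, (t : ℂ) ^ k / ((k + 1 : ℕ) : ℂ) ^ j) t := by
  obtain ⟨c, htc, hc1⟩ := exists_between ht
  have hc0 : 0 < c := (abs_nonneg t).trans_lt htc
  refine hasDerivAt_tsum_of_isPreconnected (u := fun k => c ^ k) (t := Set.Ioo (-c) c)
    (y₀ := 0) (summable_geometric_of_lt_one hc0.le hc1) isOpen_Ioo
    isPreconnected_Ioo (fun k y _ => hasDerivAt_liSeries_term j k y) (fun k y hy => ?_)
    ⟨neg_lt_zero.2 hc0, hc0⟩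
    (summable_of_ne_finset_zero (s := ∅) (by simp)) (abs_lt.1 htc)
  have hyc : ‖(y : ℂ)‖ ≤ c := by
    rw [Complex.norm_real, Real.norm_eq_abs]
    exact (abs_lt.2 hy).le
  have h1 : (1 : ℝ) ≤ ‖((k + 1 : ℕ) : ℂ)‖ ^ j := by
    apply one_le_pow₀
    rw [Complex.norm_natCast]
    exact_mod_cast k.succ_pos
  rw [norm_div, norm_pow, norm_pow]
  exact (div_le_self (by positivity) h1).trans (pow_le_pow_left₀ (norm_nonneg _) hyc k)

lemma liSeries_eq_mul_tsum (j : ℕ) (t : ℝ) :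
    LiSeries j t = t * ∑' k : ℕ, (t : ℂ) ^ k / ((k + 1 : ℕ) : ℂ) ^ j := by
  rw [LiSeries, ← tsum_mul_left]
  simp_rw [pow_succ', mul_div_assoc]

lemma hasDerivAt_liSeries_succ (j : ℕ) {t : ℝ} (ht0 : t ≠ 0) (ht : |t| < 1) :
    HasDerivAt (LiSeries (j + 1)) (LiSeries j t / t) t := by
  rw [liSeries_eq_mul_tsum j t, mul_div_cancel_left₀ _ (by exact_mod_cast ht0)]
  exact hasDerivAt_liSeries_succ_tsum j ht

lemma liSeries_zero {t : ℝ} (ht : |t| < 1) : LiSeries 0 t = t / (1 - t) := by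
  have hnorm : ‖(t : ℂ)‖ < 1 := by rwa [Complex.norm_real, Real.norm_eq_abs]
  simp only [LiSeries, pow_zero, div_one, pow_succ']
  rw [tsum_mul_left, tsum_geometric_of_norm_lt_one hnorm, div_eq_mul_inv]

lemma hasDerivAt_neg_log_div_pow (c : ℂ) (n : ℕ) {t : ℝ} (ht : t ≠ 0) :
    HasDerivAt (fun s : ℝ => ((-Real.log s : ℂ) / c) ^ (n + 1) / ((n + 1)! : ℂ))
      (-(c * t)⁻¹ * (((-Real.log t : ℂ) / c) ^ n / (n ! : ℂ))) t := by
  have hlog : HasDerivAt (fun s : ℝ => (-Real.log s : ℂ) / c) (-(t : ℂ)⁻¹ / c) t := by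
    simpa using ((Real.hasDerivAt_log ht).ofReal_comp.neg.div_const c)
  refine ((hlog.pow (n + 1)).div_const _).congr_deriv ?_
  push_cast [Nat.factorial_succ]
  field_simp

/-- `Pmat N t` is the upper left `(N + 2) × (N + 2)` corner of this infinite matrix. -/
noncomputable def periodEntry (t : ℝ) (i j : ℕ) : ℂ :=
  if j = 0 then
    if i = 0 then 1
    else if i = 1 then 0
    else (-1) ^ i * (2 * π * I) ^ (1 - (i : ℤ)) * LiSeries (i - 1) t
  else if j ≤ i then
    ((-Real.log t : ℂ) / (2 * π * I)) ^ (i - j) / (i - j)!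
  else 0

lemma Pmat_apply (N : ℕ) (t : ℝ) (i j : Fin (N + 2)) :
    Pmat N t i j = periodEntry t i j := rfl

section periodEntry

variable (t : ℝ)

@[simp] lemma periodEntry_zero_zero : periodEntry t 0 0 = 1 := rfl

@[simp] lemma periodEntry_one_zero : periodEntry t 1 0 = 0 := rfl

lemma periodEntry_add_two_zero (k : ℕ) :
    periodEntry t (k + 2) 0 = (-1) ^ k * ((2 * π * I) ^ (k + 1))⁻¹ * LiSeries (k + 1) t := by
  have hexp : 1 - ((k + 2 : ℕ) : ℤ) = -((k + 1 : ℕ) : ℤ) := by push_cast; ring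
  rw [periodEntry, if_pos rfl, if_neg (by omega), if_neg (by omega), hexp, zpow_neg,
    zpow_natCast, show k + 2 - 1 = k + 1 from rfl]
  ring

variable {t}

lemma periodEntry_of_lt {i j : ℕ} (h : i < j) : periodEntry t i j = 0 := by
  simp [periodEntry, show j ≠ 0 by omega, show ¬ j ≤ i by omega]

lemma periodEntry_of_le {i j : ℕ} (hj : j ≠ 0) (h : j ≤ i) :
    periodEntry t i j = ((-Real.log t : ℂ) / (2 * π * I)) ^ (i - j) / (i - j)! := by
  simp [periodEntry, hj, h]

end periodEntry

lemma hasDerivAt_periodEntry_add_two_zero (k : ℕ) {t : ℝ} (ht0 : t ≠ 0) (ht : |t| < 1) :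
    HasDerivAt (fun s => periodEntry s (k + 2) 0)
      ((-1) ^ k * ((2 * π * I) ^ (k + 1))⁻¹ * (LiSeries k t / t)) t := by
  simp_rw [periodEntry_add_two_zero]
  exact (hasDerivAt_liSeries_succ k ht0 ht).const_mul _

lemma hasDerivAt_periodEntry_zero_right {t : ℝ} (ht : t ∈ Set.Ioo 0 1) (i : ℕ) :
    HasDerivAt (fun s => periodEntry s i 0)
      ((t : ℂ)⁻¹ * (if 2 ≤ i then -(1 / (2 * π * I)) * periodEntry t (i - 1) 0 else 0) +
        (1 - (t : ℂ))⁻¹ * (if i = 2 then 1 / (2 * π * I) * periodEntry t 0 0 else 0)) t := by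
  have ht0 : t ≠ 0 := ht.1.ne'
  have htC : (t : ℂ) ≠ 0 := by exact_mod_cast ht0
  have ht1 : |t| < 1 := abs_lt.2 ⟨by linarith [ht.1], ht.2⟩
  match i with
  | 0 => simpa using hasDerivAt_const t (1 : ℂ)
  | 1 => simpa using hasDerivAt_const t (0 : ℂ)
  | 2 =>
    refine (hasDerivAt_periodEntry_add_two_zero 0 ht0 ht1).congr_deriv ?_
    rw [if_pos le_rfl, if_pos rfl, show 2 - 1 = 1 from rfl, periodEntry_one_zero,
      periodEntry_zero_zero, liSeries_zero ht1]
    field_simp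
    ring
  | k + 3 =>
    refine (hasDerivAt_periodEntry_add_two_zero (k + 1) ht0 ht1).congr_deriv ?_
    rw [if_pos (by omega), if_neg (by omega), show k + 3 - 1 = k + 2 from rfl,
      periodEntry_add_two_zero]
    field_simp
    ring

lemma hasDerivAt_periodEntry_of_ne_zero {t : ℝ} (ht : t ≠ 0) (i : ℕ) {j : ℕ} (hj : j ≠ 0) :
    HasDerivAt (fun s => periodEntry s i j)
      (-(2 * π * I * t)⁻¹ * periodEntry t (i - 1) j) t := by
  rcases le_or_gt i j with hij | hji
  -- for `i = 0` the truncated `i - 1` is `0`, harmless since row `0` vanishes off column `0`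
  · have hconst : (fun s => periodEntry s i j) = fun _ => periodEntry t i j := by
      ext s
      simp only [periodEntry, if_neg hj, Nat.sub_eq_zero_of_le hij, pow_zero]
    rw [hconst, periodEntry_of_lt (i := i - 1) (by omega), mul_zero]
    exact hasDerivAt_const t _
  · obtain ⟨n, hn⟩ : ∃ n, i - j = n + 1 := ⟨i - j - 1, by omega⟩
    have hentry : (fun s => periodEntry s i j) =
        fun s : ℝ => ((-Real.log s : ℂ) / (2 * π * I)) ^ (n + 1) / ((n + 1)! : ℂ) := by
      ext s
      rw [periodEntry_of_le hj hji.le, hn]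
    rw [hentry, periodEntry_of_le hj (by omega), show i - 1 - j = n by omega]
    exact hasDerivAt_neg_log_div_pow _ n ht

theorem hasDerivAt_periodEntry {t : ℝ} (ht : t ∈ Set.Ioo 0 1) (i j : ℕ) :
    HasDerivAt (fun s => periodEntry s i j)
      ((t : ℂ)⁻¹ * (if 2 ≤ i then -(1 / (2 * π * I)) * periodEntry t (i - 1) j else 0) +
        (1 - (t : ℂ))⁻¹ * (if i = 2 then 1 / (2 * π * I) * periodEntry t 0 j else 0)) t := by
  rcases eq_or_ne j 0 with rfl | hj
  · exact hasDerivAt_periodEntry_zero_right ht i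
  refine (hasDerivAt_periodEntry_of_ne_zero ht.1.ne' i hj).congr_deriv ?_
  have hsmall : i < 2 → periodEntry t (i - 1) j = 0 := fun hi => periodEntry_of_lt (by omega)
  rw [periodEntry_of_lt (Nat.pos_of_ne_zero hj)]
  split_ifs <;> simp_all [mul_assoc]

section matrices

open Fin.NatCast

variable {N : ℕ}

lemma Bzero_mul_apply (M : Matrix (Fin (N + 2)) (Fin (N + 2)) ℂ) (i j : Fin (N + 2)) :
    (Bzero N * M) i j = if 2 ≤ (i : ℕ) then -(1 / (2 * π * I)) * M (i - 1) j else 0 := by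
  rw [Bzero, Matrix.smul_mul, Matrix.smul_apply, Matrix.sum_mul, Matrix.sum_apply, smul_eq_mul]
  have hne : ∀ k ∈ Finset.Icc 1 N, (i : ℕ) ≠ k + 1 → i ≠ ((k + 1 : ℕ) : Fin (N + 2)) := by
    intro k hk hik h
    rw [h, Fin.val_cast_of_lt (by rw [Finset.mem_Icc] at hk; omega)] at hik
    exact hik rfl
  split_ifs with hi
  · have hi' : (((i - 1 : ℕ) + 1 : ℕ) : Fin (N + 2)) = i := by
      ext
      rw [Fin.val_cast_of_lt (by omega)]
      omega
    have hprev : (((i : ℕ) - 1 : ℕ) : Fin (N + 2)) = i - 1 := by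
      ext
      rw [Fin.val_cast_of_lt (by omega), Fin.coe_sub_one, if_neg (by
        intro h; simp [h] at hi)]
    rw [Finset.sum_eq_single ((i : ℕ) - 1), hi', Matrix.single_mul_apply_same, hprev, one_mul]
    · exact fun k hk hk' => Matrix.single_mul_apply_of_ne _ _ _ _ _ (hne k hk (by omega)) _
    · intro h
      exact absurd (Finset.mem_Icc.2 ⟨by omega, by omega⟩) h
  · rw [Finset.sum_eq_zero, mul_zero]
    exact fun k hk => Matrix.single_mul_apply_of_ne _ _ _ _ _
      (hne k hk (by rw [Finset.mem_Icc] at hk; omega)) _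

lemma Bone_mul_apply (hN : 1 ≤ N) (M : Matrix (Fin (N + 2)) (Fin (N + 2)) ℂ)
    (i j : Fin (N + 2)) :
    (Bone N * M) i j = if (i : ℕ) = 2 then 1 / (2 * π * I) * M 0 j else 0 := by
  rw [Bone, Matrix.smul_mul, Matrix.smul_apply, smul_eq_mul, Nat.cast_zero]
  have h2 : (((2 : ℕ) : Fin (N + 2)) : ℕ) = 2 := Fin.val_cast_of_lt (by omega)
  split_ifs with hi
  · rw [show i = ((2 : ℕ) : Fin (N + 2)) from Fin.ext (by rw [hi, h2]),
      Matrix.single_mul_apply_same, one_mul]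
  · rw [Matrix.single_mul_apply_of_ne _ _ _ _ _ (fun h => hi (by rw [h, h2])), mul_zero]

end matrices

/-- For `N ≥ 1`, the period matrix `P` is differentiable on `(0,1)` (entrywise) and satisfies
the differential equation `P'(t) = (B₀/t + B₁/(1-t)) · P(t)`. -/
theorem period_matrix_ode (N : ℕ) (hN : 1 ≤ N) (t : ℝ) (ht : t ∈ Set.Ioo (0 : ℝ) 1)
    (i j : Fin (N + 2)) :
    HasDerivAt (fun s : ℝ => Pmat N s i j)
      (((((t : ℂ)⁻¹ • Bzero N) + (((1 : ℂ) - (t : ℂ))⁻¹ • Bone N)) * Pmat N t) i j) t := by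
  rw [Matrix.add_mul, Matrix.add_apply, Matrix.smul_mul, Matrix.smul_mul, Matrix.smul_apply,
    Matrix.smul_apply, smul_eq_mul, smul_eq_mul, Bzero_mul_apply, Bone_mul_apply hN]
  convert hasDerivAt_periodEntry ht i j using 3
  · rfl
  · split_ifs with hi
    · rw [Pmat_apply, Fin.coe_sub_one, if_neg (fun h => by simp [h] at hi)]
    · rfl
  · rfl
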